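/- Let N ⊂ ℝ⁵ be the surface {z = p = q = 0}, parametrized by i(x, y) = (x, y, 0, 0, 0). Then i*θ = 0 and i*(dz) = 0 (so N is an integral manifold of the system generated by θ, dθ, and F = z), but i*(dx ∧ dy) = dx ∧ dy ≠ 0, so N is not an integral manifold of the ideal generated by θ, dθ, and Ω = dx ∧ dy. -/
import Mathlib


noncomputable section

abbrev V5 := Fin 5 → ℝ

/-- The contact form `θ = dz − p dx − q dy`. -/
def theta : V5 → V5 → ℝ := fun m v => v 2 - m 3 * v 0 - m 4 * v 1

/-- The inclusion `i(x,y) = (x, y, 0, 0, 0)` of the surface `N = {z = p = q = 0}`. -/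
def incl : (Fin 2 → ℝ) → V5 := fun w => ![w 0, w 1, 0, 0, 0]


def inclL : (Fin 2 → ℝ) →ₗ[ℝ] V5 where
  toFun := incl
  map_add' a b := by
    funext i
    fin_cases i <;> simp [incl]
  map_smul' c a := by
    funext i
    fin_cases i <;> simp [incl]

lemma fderiv_incl (w u : Fin 2 → ℝ) : fderiv ℝ incl w u = incl u := by
  have h : fderiv ℝ incl w = inclL.toContinuousLinearMap :=
    (inclL.toContinuousLinearMap.hasFDerivAt (x := w)).fderiv
  rw [h]
  rfl

/-- `N = {z = p = q = 0}` pulls back `θ` and `dz` (hence `dθ`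
and `F = z`) to zero, so it is an integral manifold of `{θ, dθ, F = z}`, but it
pulls back `Ω = dx ∧ dy` to `dx ∧ dy ≠ 0`, so it is not an integral manifold of
the ideal generated by `θ, dθ, Ω`. -/
theorem counterexample_surface :
    (∀ w : Fin 2 → ℝ, (fun x : Fin 5 → ℝ => x 2) (incl w) = 0) ∧
    (∀ (w u : Fin 2 → ℝ), theta (incl w) (fderiv ℝ incl w u) = 0) ∧
    (∀ (w u : Fin 2 → ℝ), (fderiv ℝ incl w u) 2 = 0) ∧
    (∀ (w u v : Fin 2 → ℝ),
      (fderiv ℝ incl w u) 0 * (fderiv ℝ incl w v) 1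
        - (fderiv ℝ incl w v) 0 * (fderiv ℝ incl w u) 1
      = u 0 * v 1 - v 0 * u 1) ∧
    (∀ w : Fin 2 → ℝ, ∃ u v : Fin 2 → ℝ,
      (fderiv ℝ incl w u) 0 * (fderiv ℝ incl w v) 1
        - (fderiv ℝ incl w v) 0 * (fderiv ℝ incl w u) 1 ≠ 0) := by
  refine ⟨fun w => by simp [incl], ?_, ?_, ?_, ?_⟩
  · intro w u
    simp [fderiv_incl, theta, incl]
  · intro w u
    simp [fderiv_incl, incl]
  · intro w u v
    simp [fderiv_incl, incl]
  · intro w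
    refine ⟨![1, 0], ![0, 1], ?_⟩
    simp [fderiv_incl, incl]
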